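/- arXiv:2111.10514 — 2 statements merged into one kernel-verified Lean document; each statement's English description precedes it below -/
import Mathlib

section
/- Let K_{1,m} be a star subgraph of FQ_n with n ≥ 4 and 2 ≤ m ≤ n+1. If u is a vertex of FQ_n not in K_{1,m}, then u has at most 2 neighbors among the vertices of K_{1,m}, and u has exactly 2 such neighbors only if both of these neighbors are leaves of the star. -/
/-- Number of coordinates in which two vertices of the cube differ (Hamming distance). -/
def diffCount {n : ℕ} (x y : Fin n → Bool) : ℕ :=
  (Finset.univ.filter fun i => x i ≠ y i).card

lemma diffCount_comm {n : ℕ} (x y : Fin n → Bool) : diffCount x y = diffCount y x := by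
  unfold diffCount
  congr 1
  apply Finset.filter_congr
  intro i _
  exact ne_comm

/-- The `n`-dimensional hypercube. -/
def Qn (n : ℕ) : SimpleGraph (Fin n → Bool) where
  Adj x y := diffCount x y = 1
  symm := ⟨by intro x y h; rw [diffCount_comm]; exact h⟩
  loopless := ⟨by intro x h; simp [diffCount] at h⟩

/-- The `n`-dimensional folded hypercube. -/
def FQn (n : ℕ) : SimpleGraph (Fin n → Bool) where
  Adj x y := x ≠ y ∧ (diffCount x y = 1 ∨ diffCount x y = n)
  symm := by
    constructor
    rintro x y ⟨h1, h2⟩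
    exact ⟨h1.symm, by rw [diffCount_comm]; exact h2⟩
  loopless := ⟨fun x h => h.1 rfl⟩

/-- Flip bit `i` (hypercube neighbour `u^{i+1}` in 1-based notation). -/
def hFlip {n : ℕ} (u : Fin n → Bool) (i : Fin n) : Fin n → Bool :=
  fun j => if j = i then !(u j) else u j

/-- Flip bits `0,…,i` (complement neighbour `ū^{i+1}` in 1-based notation). -/
def cFlip {n : ℕ} (u : Fin n → Bool) (i : Fin n) : Fin n → Bool :=
  fun j => if j ≤ i then !(u j) else u j

lemma hFlip_hFlip {n : ℕ} (u : Fin n → Bool) (i : Fin n) : hFlip (hFlip u i) i = u := by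
  funext j; simp only [hFlip]; split <;> simp

lemma cFlip_cFlip {n : ℕ} (u : Fin n → Bool) (i : Fin n) : cFlip (cFlip u i) i = u := by
  funext j; simp only [cFlip]; split <;> simp

/-- The `n`-dimensional augmented cube. -/
def AQn (n : ℕ) : SimpleGraph (Fin n → Bool) where
  Adj x y := x ≠ y ∧ ((∃ i, y = hFlip x i) ∨ (∃ i : Fin n, 1 ≤ i.val ∧ y = cFlip x i))
  symm := by
    constructor
    rintro x y ⟨h1, h2⟩
    refine ⟨h1.symm, ?_⟩
    rcases h2 with ⟨i, rfl⟩ | ⟨i, hi, rfl⟩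
    · exact Or.inl ⟨i, (hFlip_hFlip x i).symm⟩
    · exact Or.inr ⟨i, hi, (cFlip_cFlip x i).symm⟩
  loopless := ⟨fun x h => h.1 rfl⟩

/-!
Two vertices of `FQ_n` are adjacent iff the set of coordinates in which they differ is a singleton
or all of `Fin n`, and these difference sets compose by symmetric difference. For `n ≥ 3` the
symmetric difference of two such sets is never such a set, so `FQ_n` is triangle-free; for `n ≥ 4`
a nonempty set is the symmetric difference of at most one pair of such sets, so two distinct
vertices have at most two common neighbours. Hence a vertex adjacent to the centre of a star sees
no leaf, and otherwise its neighbours on the star are common neighbours of it and the centre.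
-/

open Finset SimpleGraph
open scoped symmDiff

section FoldedStep

variable {α : Type*} [DecidableEq α]

lemma card_singleton_symmDiff_of_mem {k : α} {C : Finset α} (h : k ∈ C) :
    #({k} ∆ C) = #C - 1 := by
  have : {k} ∆ C = C.erase k := by
    ext i
    by_cases hi : i = k <;> simp [mem_symmDiff, hi, h]
  rw [this, card_erase_of_mem h]

lemma card_singleton_symmDiff_of_notMem {k : α} {C : Finset α} (h : k ∉ C) :
    #({k} ∆ C) = #C + 1 := by
  rw [(disjoint_singleton_left.2 h).symmDiff_eq_sup, sup_eq_union, singleton_union,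
    card_insert_of_notMem h]

variable [Fintype α]

/-- The coordinate sets whose flip is an edge of the folded cube on `α → Bool`. -/
def IsFoldedStep (A : Finset α) : Prop := #A = 1 ∨ #A = Fintype.card α

lemma card_univ_symmDiff (C : Finset α) : #(univ ∆ C) = Fintype.card α - #C := by
  rw [← top_eq_univ, top_symmDiff, hnot_eq_compl, card_compl]

lemma IsFoldedStep.not_symmDiff (h3 : 3 ≤ Fintype.card α) {A B : Finset α}
    (hA : IsFoldedStep A) (hB : IsFoldedStep B) : ¬ IsFoldedStep (A ∆ B) := by
  unfold IsFoldedStep at *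
  rcases hA with hA | hA
  · obtain ⟨i, rfl⟩ := card_eq_one.1 hA
    by_cases hi : i ∈ B
    · rw [card_singleton_symmDiff_of_mem hi]
      omega
    · have := card_lt_univ_of_notMem hi
      rw [card_singleton_symmDiff_of_notMem hi]
      omega
  · rw [card_eq_iff_eq_univ] at hA
    subst hA
    rw [card_univ_symmDiff]
    omega

lemma exists_isFoldedStep_symmDiff_subset_pair (h4 : 4 ≤ Fintype.card α) {C : Finset α}
    (hC : C.Nonempty) :
    ∃ A B : Finset α, {X | IsFoldedStep X ∧ IsFoldedStep (X ∆ C)} ⊆ ({A, B} : Set _) := by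
  have hCpos : 0 < #C := card_pos.2 hC
  by_cases h2 : #C = 2
  · obtain ⟨p, q, -, rfl⟩ := card_eq_two.1 h2
    refine ⟨{p}, {q}, ?_⟩
    rintro X ⟨hX | hX, hXC⟩
    · obtain ⟨k, rfl⟩ := card_eq_one.1 hX
      by_contra hk
      have hk : k ∉ ({p, q} : Finset α) := by simpa using hk
      rw [IsFoldedStep, card_singleton_symmDiff_of_notMem hk, h2] at hXC
      omega
    · rw [card_eq_iff_eq_univ] at hX
      subst hX
      rw [IsFoldedStep, card_univ_symmDiff, h2] at hXC
      omega
  · refine ⟨univ, Cᶜ, ?_⟩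
    rintro X ⟨hX, hXC | hXC⟩
    · rcases hX with hX | hX
      · obtain ⟨k, rfl⟩ := card_eq_one.1 hX
        by_cases hk : k ∈ C
        · rw [card_singleton_symmDiff_of_mem hk] at hXC
          omega
        · rw [card_singleton_symmDiff_of_notMem hk] at hXC
          omega
      · exact Or.inl (card_eq_iff_eq_univ _ |>.1 hX)
    · rw [card_eq_iff_eq_univ] at hXC
      right
      calc X = X ∆ C ∆ C := (symmDiff_symmDiff_cancel_right C X).symm
        _ = Cᶜ := by rw [hXC, ← top_eq_univ, top_symmDiff, hnot_eq_compl]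

end FoldedStep

section FoldedCube

variable {ι : Type*} [Fintype ι]

def diffSet (x y : ι → Bool) : Finset ι := univ.filter fun i => x i ≠ y i

lemma diffSet_eq_empty {x y : ι → Bool} : diffSet x y = ∅ ↔ x = y := by
  simp [diffSet, filter_eq_empty_iff, funext_iff]

variable [DecidableEq ι]

lemma diffSet_symmDiff_diffSet (x y z : ι → Bool) :
    diffSet x y ∆ diffSet x z = diffSet y z := by
  ext i
  simp only [diffSet, mem_symmDiff, mem_filter, mem_univ, true_and]
  cases x i <;> cases y i <;> cases z i <;> decide

end FoldedCube

lemma FQn_adj_iff {n : ℕ} (hn : 0 < n) {x y : Fin n → Bool} :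
    (FQn n).Adj x y ↔ IsFoldedStep (diffSet x y) := by
  rw [IsFoldedStep, Fintype.card_fin]
  refine ⟨fun h => h.2, fun h => ⟨?_, h⟩⟩
  rintro rfl
  rw [diffSet_eq_empty.2 rfl, card_empty] at h
  omega

lemma FQn_cliqueFree_three {n : ℕ} (hn : 3 ≤ n) : (FQn n).CliqueFree 3 := by
  intro s hs
  obtain ⟨a, b, x, hab, hax, hbx, rfl⟩ := is3Clique_iff.1 hs
  rw [FQn_adj_iff (by omega)] at hab hax hbx
  rw [← diffSet_symmDiff_diffSet a] at hbx
  exact hab.not_symmDiff (by simpa) hax hbx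

lemma FQn_ncard_commonNeighbors_le_two {n : ℕ} (hn : 4 ≤ n) {u c : Fin n → Bool}
    (huc : u ≠ c) : ((FQn n).commonNeighbors u c).ncard ≤ 2 := by
  have hC : (diffSet u c).Nonempty := nonempty_iff_ne_empty.2 (mt diffSet_eq_empty.1 huc)
  obtain ⟨A, B, hAB⟩ := exists_isFoldedStep_symmDiff_subset_pair (by simpa) hC
  have hmaps : ∀ x ∈ (FQn n).commonNeighbors u c, diffSet u x ∈ ({A, B} : Set _) := by
    rintro x ⟨hux, hcx⟩
    rw [mem_neighborSet, FQn_adj_iff (by omega)] at hux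
    rw [mem_neighborSet, (FQn n).adj_comm, FQn_adj_iff (by omega),
      ← diffSet_symmDiff_diffSet u] at hcx
    exact hAB ⟨hux, hcx⟩
  have hinj : Set.InjOn (diffSet u) ((FQn n).commonNeighbors u c) := by
    intro x _ y _ hxy
    rw [← diffSet_eq_empty, ← diffSet_symmDiff_diffSet u, hxy, symmDiff_self, bot_eq_empty]
  calc _ ≤ ({A, B} : Set (Finset (Fin n))).ncard :=
        Set.ncard_le_ncard_of_injOn _ hmaps hinj (Set.toFinite _)
    _ ≤ 2 := (Set.ncard_insert_le _ _).trans (by simp)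

theorem stmt5_general (n m : ℕ) (hn : 4 ≤ n)
    (c : Fin n → Bool) (l : Fin m → Fin n → Bool)
    (hadj : ∀ i, (FQn n).Adj c (l i))
    (u : Fin n → Bool) (huc : u ≠ c) :
    ((FQn n).neighborSet u ∩ ({c} ∪ Set.range l)).ncard ≤ 2 ∧
    (((FQn n).neighborSet u ∩ ({c} ∪ Set.range l)).ncard = 2 →
      (FQn n).neighborSet u ∩ ({c} ∪ Set.range l) ⊆ Set.range l) := by
  set S := (FQn n).neighborSet u ∩ ({c} ∪ Set.range l)
  by_cases hu : (FQn n).Adj u c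
  · have hS : S = {c} := by
      refine Set.eq_singleton_iff_unique_mem.2 ⟨⟨hu, Or.inl rfl⟩, ?_⟩
      rintro x ⟨hx, rfl | ⟨i, rfl⟩⟩
      · rfl
      · exact absurd (is3Clique_triple_iff.2 ⟨hu, hx, hadj i⟩)
          (FQn_cliqueFree_three (by omega) _)
    simp [hS]
  · have hSl : S ⊆ Set.range l := by
      rintro x ⟨hx, rfl | hxl⟩
      exacts [absurd hx hu, hxl]
    have hSN : S ⊆ (FQn n).commonNeighbors u c := by
      intro x hx
      obtain ⟨i, rfl⟩ := hSl hx
      exact ⟨hx.1, hadj i⟩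
    exact ⟨(Set.ncard_le_ncard hSN (Set.toFinite _)).trans
      (FQn_ncard_commonNeighbors_le_two hn huc), fun _ => hSl⟩

/-- a vertex outside a star `K_{1,m}` in `FQ_n` (`n ≥ 4`, `2 ≤ m ≤ n+1`)
has at most two neighbours on the star, and if it has exactly two then both are leaves. -/
theorem stmt5 (n m : ℕ) (hn : 4 ≤ n) (hm1 : 2 ≤ m) (hm2 : m ≤ n + 1)
    (c : Fin n → Bool) (l : Fin m → Fin n → Bool)
    (hinj : Function.Injective l) (hadj : ∀ i, (FQn n).Adj c (l i))
    (u : Fin n → Bool) (huc : u ≠ c) (hul : ∀ i, u ≠ l i) :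
    ((FQn n).neighborSet u ∩ ({c} ∪ Set.range l)).ncard ≤ 2 ∧
    (((FQn n).neighborSet u ∩ ({c} ∪ Set.range l)).ncard = 2 →
      (FQn n).neighborSet u ∩ ({c} ∪ Set.range l) ⊆ Set.range l) :=
  stmt5_general n m hn c l hadj u huc
end

section
/- In AQ_n (n ≥ 2), for a complement edge u ū^i with 2 ≤ i ≤ n−1, the common neighbors of u and ū^i are exactly {u^i, u^{i+1}, ū^{i+1}, ū^{i−1}}, while for i = n they are exactly {ū^{n−1}, u^n}. -/
/-!
Along an edge of `AQ_n` a vertex is flipped on a coordinate set that is a singleton `{j}` or an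
initial segment `Iic j`. Flipping turns `(Finset (Fin n), ∆)` into a free action on the vertices,
so the common neighbours of `u` and `u` flipped on `Iic i` are `u` flipped on those `s` for which
both `s` and `s ∆ Iic i` have one of the two shapes; comparing a few coordinates in each of the
four combinations of shapes pins `s` down.
-/

open Finset
open scoped symmDiff

section FlipOn

variable {n : ℕ}

def flipOn (u : Fin n → Bool) (s : Finset (Fin n)) : Fin n → Bool :=
  fun j => if j ∈ s then !u j else u j

lemma hFlip_eq_flipOn (u : Fin n → Bool) (i : Fin n) : hFlip u i = flipOn u {i} := by
  funext j; simp [hFlip, flipOn]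

lemma cFlip_eq_flipOn (u : Fin n → Bool) (i : Fin n) : cFlip u i = flipOn u (Iic i) := by
  funext j; simp [cFlip, flipOn]

lemma flipOn_flipOn (u : Fin n → Bool) (s t : Finset (Fin n)) :
    flipOn (flipOn u s) t = flipOn u (s ∆ t) := by
  funext j; by_cases hs : j ∈ s <;> by_cases ht : j ∈ t <;> simp [flipOn, mem_symmDiff, hs, ht]

lemma flipOn_empty (u : Fin n → Bool) : flipOn u ∅ = u := by
  funext j; simp [flipOn]

lemma flipOn_injective (u : Fin n → Bool) : Function.Injective (flipOn u) := by
  intro s t h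
  ext j
  have hj := congrFun h j
  by_cases hs : j ∈ s <;> by_cases ht : j ∈ t <;> simp_all [flipOn]

def IsAQnMask (s : Finset (Fin n)) : Prop := (∃ j, s = {j}) ∨ ∃ j, s = Iic j

lemma IsAQnMask.nonempty {s : Finset (Fin n)} : IsAQnMask s → s.Nonempty := by
  rintro (⟨j, rfl⟩ | ⟨j, rfl⟩)
  · exact singleton_nonempty j
  · exact nonempty_Iic

lemma AQn_adj_iff_exists_flipOn (u v : Fin n → Bool) :
    (AQn n).Adj u v ↔ ∃ s, IsAQnMask s ∧ v = flipOn u s := by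
  constructor
  · rintro ⟨-, ⟨j, rfl⟩ | ⟨j, -, rfl⟩⟩
    · exact ⟨{j}, .inl ⟨j, rfl⟩, hFlip_eq_flipOn u j⟩
    · exact ⟨Iic j, .inr ⟨j, rfl⟩, cFlip_eq_flipOn u j⟩
  · rintro ⟨s, hs, rfl⟩
    refine ⟨fun h => hs.nonempty.ne_empty (flipOn_injective u ?_), ?_⟩
    · rw [flipOn_empty, ← h]
    rcases hs with ⟨j, rfl⟩ | ⟨j, rfl⟩
    · exact .inl ⟨j, (hFlip_eq_flipOn u j).symm⟩
    rcases Nat.eq_zero_or_pos j.val with hj | hj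
    · have hIic : Iic j = {j} := by
        ext l; simp only [mem_Iic, mem_singleton, Fin.le_def, Fin.ext_iff]; omega
      exact .inl ⟨j, by rw [hIic, hFlip_eq_flipOn]⟩
    · exact .inr ⟨j, hj, (cFlip_eq_flipOn u j).symm⟩

lemma AQn_neighborSet_inter_neighborSet_flipOn (u : Fin n → Bool) (m : Finset (Fin n)) :
    (AQn n).neighborSet u ∩ (AQn n).neighborSet (flipOn u m) =
      flipOn u '' {s | IsAQnMask s ∧ IsAQnMask (s ∆ m)} := by
  ext v
  simp only [Set.mem_inter_iff, SimpleGraph.mem_neighborSet, AQn_adj_iff_exists_flipOn,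
    flipOn_flipOn, Set.mem_image, Set.mem_ofPred_eq]
  constructor
  · rintro ⟨⟨s, hs, rfl⟩, ⟨t, ht, heq⟩⟩
    obtain rfl := flipOn_injective u heq
    exact ⟨m ∆ t, ⟨hs, by rwa [symmDiff_symmDiff_self']⟩, rfl⟩
  · rintro ⟨s, ⟨hs, hsm⟩, rfl⟩
    exact ⟨⟨s, hs, rfl⟩, ⟨s ∆ m, hsm, by rw [symmDiff_comm s m, symmDiff_symmDiff_cancel_left]⟩⟩

lemma eq_of_isAQnMask_symmDiff_Iic {i : Fin n} (hi : 1 ≤ i.val) {s : Finset (Fin n)}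
    (hs : IsAQnMask s) (hsi : IsAQnMask (s ∆ Iic i)) :
    s = {i} ∨ s = Iic ⟨i - 1, by omega⟩ ∨
      ∃ h : i.val + 1 < n, s = {⟨i + 1, h⟩} ∨ s = Iic ⟨i + 1, h⟩ := by
  rcases hs with ⟨j, rfl⟩ | ⟨j, rfl⟩ <;> rcases hsi with ⟨k, hk⟩ | ⟨k, hk⟩ <;>
    have H := fun l (hl : l < n) => Finset.ext_iff.mp hk ⟨l, hl⟩ <;>
    simp only [mem_symmDiff, mem_singleton, mem_Iic, Fin.le_def, Fin.ext_iff] at H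
  · have e0 := H 0 (by omega)
    have e1 := H 1 (by omega)
    have ei := H i i.isLt
    obtain hj | hj : j.val = i.val ∨ j.val = 0 := by omega
    · exact .inl (congrArg _ (Fin.ext hj))
    · refine .inr (.inl ?_)
      ext l; simp only [mem_Iic, mem_singleton, Fin.le_def, Fin.ext_iff]; omega
  · have e0 := H 0 (by omega)
    have ei := H i i.isLt
    have ei1 : i.val + 1 < n → _ := H (i + 1)
    have ej := H j j.isLt
    obtain hj | ⟨hj, hn⟩ : j.val = i.val ∨ j.val = i.val + 1 ∧ i.val + 1 < n := by omega
    · exact .inl (congrArg _ (Fin.ext hj))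
    · exact .inr (.inr ⟨hn, .inl (congrArg _ (Fin.ext hj))⟩)
  · have ei := H i i.isLt
    have ei1 : i.val + 1 < n → _ := H (i + 1)
    have ej := H j j.isLt
    have ej1 : j.val + 1 < n → _ := H (j + 1)
    have ek := H k k.isLt
    obtain hj | ⟨hj, hn⟩ : j.val = i.val - 1 ∨ j.val = i.val + 1 ∧ i.val + 1 < n := by omega
    · exact .inr (.inl (congrArg _ (Fin.ext hj)))
    · exact .inr (.inr ⟨hn, .inr (congrArg _ (Fin.ext hj))⟩)
  · -- `0` lies in every `Iic k` but in no `Iic j ∆ Iic i`.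
    have e0 := H 0 (by omega)
    omega

lemma setOf_isAQnMask_symmDiff_Iic {i : Fin n} (hi : 1 ≤ i.val) :
    {s | IsAQnMask s ∧ IsAQnMask (s ∆ Iic i)} =
      if h : i.val + 1 < n then {{i}, {⟨i + 1, h⟩}, Iic ⟨i + 1, h⟩, Iic ⟨i - 1, by omega⟩}
      else {Iic ⟨i - 1, by omega⟩, {i}} := by
  have mem (s : Finset (Fin n)) : IsAQnMask s ∧ IsAQnMask (s ∆ Iic i) ↔
      s = {i} ∨ s = Iic ⟨i - 1, by omega⟩ ∨
        ∃ h : i.val + 1 < n, s = {⟨i + 1, h⟩} ∨ s = Iic ⟨i + 1, h⟩ := by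
    refine ⟨fun ⟨hs, hsi⟩ => eq_of_isAQnMask_symmDiff_Iic hi hs hsi, ?_⟩
    rintro (rfl | rfl | ⟨h, rfl | rfl⟩) <;>
      [refine ⟨.inl ⟨_, rfl⟩, .inr ⟨⟨i - 1, by omega⟩, ?_⟩⟩;
       refine ⟨.inr ⟨_, rfl⟩, .inl ⟨i, ?_⟩⟩;
       refine ⟨.inl ⟨_, rfl⟩, .inr ⟨⟨i + 1, h⟩, ?_⟩⟩;
       refine ⟨.inr ⟨_, rfl⟩, .inl ⟨⟨i + 1, h⟩, ?_⟩⟩] <;>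
      (ext l; simp only [mem_symmDiff, mem_singleton, mem_Iic, Fin.le_def, Fin.ext_iff]; omega)
  ext s
  split_ifs with h <;>
    simp only [Set.mem_ofPred_eq, mem, h, exists_true_left, IsEmpty.exists_iff, or_false,
      Set.mem_insert_iff, Set.mem_singleton_iff] <;>
    tauto

end FlipOn

/-- Here `i : Fin n` with `1 ≤ i.val` is the 1-based bit `i + 1 ≥ 2`, so the first case is
`2 ≤ i + 1 ≤ n - 1`. -/
theorem stmt12_general (n : ℕ) (u : Fin n → Bool) (i : Fin n) (hi : 1 ≤ i.val) :
    (AQn n).neighborSet u ∩ (AQn n).neighborSet (cFlip u i) =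
      if h : i.val + 1 < n then
        {hFlip u i, hFlip u ⟨i.val + 1, h⟩, cFlip u ⟨i.val + 1, h⟩,
          cFlip u ⟨i.val - 1, Nat.lt_of_le_of_lt (Nat.sub_le _ _) i.isLt⟩}
      else
        {cFlip u ⟨i.val - 1, Nat.lt_of_le_of_lt (Nat.sub_le _ _) i.isLt⟩, hFlip u i} := by
  rw [cFlip_eq_flipOn, AQn_neighborSet_inter_neighborSet_flipOn, setOf_isAQnMask_symmDiff_Iic hi]
  split_ifs <;>
    simp only [Set.image_insert_eq, Set.image_singleton, hFlip_eq_flipOn, cFlip_eq_flipOn]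

/-- common neighbours across a complement edge `u ū^i` of `AQ_n` (`n ≥ 2`).
Here `i : Fin n` with `1 ≤ i.val` encodes the (1-based) bit `i+1 ≥ 2`; for
`2 ≤ i+1 ≤ n-1` the common neighbours are `{u^i, u^{i+1}, ū^{i+1}, ū^{i-1}}`, and for
bit `n` they are `{ū^{n-1}, u^n}`. -/
theorem stmt12 (n : ℕ) (hn : 2 ≤ n) (u : Fin n → Bool) (i : Fin n) (hi : 1 ≤ i.val) :
    (AQn n).neighborSet u ∩ (AQn n).neighborSet (cFlip u i) =
      if h : i.val + 1 < n then
        {hFlip u i, hFlip u ⟨i.val + 1, h⟩, cFlip u ⟨i.val + 1, h⟩,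
          cFlip u ⟨i.val - 1, Nat.lt_of_le_of_lt (Nat.sub_le _ _) i.isLt⟩}
      else
        {cFlip u ⟨i.val - 1, Nat.lt_of_le_of_lt (Nat.sub_le _ _) i.isLt⟩, hFlip u i} :=
  stmt12_general n u i hi
end
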